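/- arXiv:2011.08454 — 2 statements merged into one kernel-verified Lean document; each statement's English description precedes it below -/
import Mathlib

section
/- Let M̂^ν(k) be the MG symbol: with d(k) = |k|^2 k_3^2 + (k_2^2 + ν|k|^4)^2, set M̂^ν_1(k) = [k_2 k_3 |k|^2 − k_1 k_3 (k_2^2 + ν|k|^4)]/d(k), M̂^ν_2(k) = [−k_1 k_3 |k|^2 − k_2 k_3 (k_2^2 + ν|k|^4)]/d(k), M̂^ν_3(k) = [(k_1^2+k_2^2)(k_2^2+ν|k|^4)]/d(k). Then for every ν > 0 there exists a constant C_ν > 0 such that |M̂^ν(k)| ≤ C_ν |k|^{−2} for all nonzero k ∈ ℤ^3. That is, for positive ν the MG velocity operator is smoothing of degree two (condition (A3): the associated operators T^ν_{ij} with symbol bounded by |k|^{−1}|M̂^ν(k)| satisfy |T̂^ν_{ij}(k)| ≤ C_ν|k|^{−3}). -/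
noncomputable section

/-- `|k|²` for `k = (k₁,k₂,k₃) ∈ ℤ³`. -/
def normSq3 (k1 k2 k3 : ℤ) : ℝ := (k1 : ℝ) ^ 2 + (k2 : ℝ) ^ 2 + (k3 : ℝ) ^ 2

/-- Denominator `d(k) = |k|² k₃² + (k₂² + ν |k|⁴)²` of the MG symbol. -/
def mgD (ν : ℝ) (k1 k2 k3 : ℤ) : ℝ :=
  normSq3 k1 k2 k3 * (k3 : ℝ) ^ 2 + ((k2 : ℝ) ^ 2 + ν * (normSq3 k1 k2 k3) ^ 2) ^ 2

/-- First component of the MG symbol `M̂^ν(k)`. -/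
def mgM1 (ν : ℝ) (k1 k2 k3 : ℤ) : ℝ :=
  ((k2 : ℝ) * (k3 : ℝ) * normSq3 k1 k2 k3
      - (k1 : ℝ) * (k3 : ℝ) * ((k2 : ℝ) ^ 2 + ν * (normSq3 k1 k2 k3) ^ 2)) / mgD ν k1 k2 k3

/-- Second component of the MG symbol `M̂^ν(k)`. -/
def mgM2 (ν : ℝ) (k1 k2 k3 : ℤ) : ℝ :=
  (-(k1 : ℝ) * (k3 : ℝ) * normSq3 k1 k2 k3
      - (k2 : ℝ) * (k3 : ℝ) * ((k2 : ℝ) ^ 2 + ν * (normSq3 k1 k2 k3) ^ 2)) / mgD ν k1 k2 k3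

/-- Third component of the MG symbol `M̂^ν(k)`. -/
def mgM3 (ν : ℝ) (k1 k2 k3 : ℤ) : ℝ :=
  (((k1 : ℝ) ^ 2 + (k2 : ℝ) ^ 2) * ((k2 : ℝ) ^ 2 + ν * (normSq3 k1 k2 k3) ^ 2)) / mgD ν k1 k2 k3

/-!
The cross terms of the first two components cancel and `d(k)` factors out, giving the exact
identity `|M̂^ν(k)|² = (k₁² + k₂²) |k|² / d(k)`. Since `d(k) ≥ (ν |k|⁴)²`, this is at most
`(ν |k|²)⁻²`, so `C_ν = 1/ν` works.
-/

lemma normSq3_pos {k1 k2 k3 : ℤ} (hk : ¬(k1 = 0 ∧ k2 = 0 ∧ k3 = 0)) : 0 < normSq3 k1 k2 k3 := by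
  by_contra! hle
  unfold normSq3 at hle
  have eq_zero_of_sq (n : ℤ) (h : (n : ℝ) ^ 2 = 0) : n = 0 := by
    exact_mod_cast pow_eq_zero_iff two_ne_zero |>.mp h
  have h1 := sq_nonneg (k1 : ℝ)
  have h2 := sq_nonneg (k2 : ℝ)
  have h3 := sq_nonneg (k3 : ℝ)
  exact hk ⟨eq_zero_of_sq _ (by linarith), eq_zero_of_sq _ (by linarith),
    eq_zero_of_sq _ (by linarith)⟩

lemma sq_mul_sq_le_mgD {ν : ℝ} (hν : 0 ≤ ν) (k1 k2 k3 : ℤ) :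
    (ν * normSq3 k1 k2 k3 ^ 2) ^ 2 ≤ mgD ν k1 k2 k3 := by
  have hs : 0 ≤ normSq3 k1 k2 k3 := by unfold normSq3; positivity
  have ha : ν * normSq3 k1 k2 k3 ^ 2 ≤ (k2 : ℝ) ^ 2 + ν * normSq3 k1 k2 k3 ^ 2 :=
    le_add_of_nonneg_left (sq_nonneg _)
  unfold mgD
  nlinarith [pow_le_pow_left₀ (by positivity) ha 2, mul_nonneg hs (sq_nonneg (k3 : ℝ))]

lemma mgM_normSq_eq {ν : ℝ} {k1 k2 k3 : ℤ} (hd : mgD ν k1 k2 k3 ≠ 0) :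
    mgM1 ν k1 k2 k3 ^ 2 + mgM2 ν k1 k2 k3 ^ 2 + mgM3 ν k1 k2 k3 ^ 2
      = ((k1 : ℝ) ^ 2 + (k2 : ℝ) ^ 2) * normSq3 k1 k2 k3 / mgD ν k1 k2 k3 := by
  unfold mgM1 mgM2 mgM3
  field_simp
  unfold mgD normSq3
  ring

lemma mgM_normSq_le {ν : ℝ} (hν : 0 < ν) {k1 k2 k3 : ℤ} (hk : ¬(k1 = 0 ∧ k2 = 0 ∧ k3 = 0)) :
    mgM1 ν k1 k2 k3 ^ 2 + mgM2 ν k1 k2 k3 ^ 2 + mgM3 ν k1 k2 k3 ^ 2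
      ≤ (1 / ν / normSq3 k1 k2 k3) ^ 2 := by
  set s := normSq3 k1 k2 k3
  have hs : 0 < s := normSq3_pos hk
  have hνs : 0 < (ν * s ^ 2) ^ 2 := by positivity
  have hd := sq_mul_sq_le_mgD hν.le k1 k2 k3
  have hxy : (k1 : ℝ) ^ 2 + (k2 : ℝ) ^ 2 ≤ s := le_add_of_nonneg_right (sq_nonneg _)
  rw [mgM_normSq_eq (hνs.trans_le hd).ne']
  calc ((k1 : ℝ) ^ 2 + (k2 : ℝ) ^ 2) * s / mgD ν k1 k2 k3
      ≤ s * s / (ν * s ^ 2) ^ 2 := by gcongr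
    _ = (1 / ν / s) ^ 2 := by field_simp

/-- Condition (A3) for the MG symbol: for every `ν > 0` there is `C_ν > 0` such that
`|M̂^ν(k)| ≤ C_ν |k|⁻²` for all nonzero `k ∈ ℤ³` (here `|k|⁻² = 1/|k|² = 1/normSq3 k`):
for positive `ν` the MG velocity operator is smoothing of degree two. -/
theorem mg_symbol_smoothing_degree_two (ν : ℝ) (hν : 0 < ν) :
    ∃ C : ℝ, 0 < C ∧
      ∀ k1 k2 k3 : ℤ, ¬(k1 = 0 ∧ k2 = 0 ∧ k3 = 0) →
        Real.sqrt ((mgM1 ν k1 k2 k3) ^ 2 + (mgM2 ν k1 k2 k3) ^ 2 + (mgM3 ν k1 k2 k3) ^ 2)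
          ≤ C / normSq3 k1 k2 k3 := by
  refine ⟨1 / ν, by positivity, fun k1 k2 k3 hk => ?_⟩
  have hs := normSq3_pos hk
  exact Real.sqrt_le_iff.mpr ⟨by positivity, mgM_normSq_le hν hk⟩
end
end

section
/- Let M̂^0 be the inviscid MG symbol: with d(k) = |k|^2 k_3^2 + k_2^4, set M̂^0_2(k) = [−k_1 k_3 |k|^2 − k_2 k_3 k_2^2]/d(k) for k ∈ ℤ^3 with d(k) ≠ 0. Then for every n ∈ ℤ, evaluating at k = (n, 0, 1) gives M̂^0_2(n,0,1) = −n. Consequently the symbol M̂^0 is unbounded: for every C > 0 there exists k ∈ ℤ^3 with d(k) ≠ 0 and |M̂^0(k)| > C, i.e. the inviscid MG velocity operator is a genuinely singular operator of order 1. -/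
noncomputable section

theorem normSq3_pos_of_ne_zero {k1 k2 k3 : ℤ} (hk3 : k3 ≠ 0) : 0 < normSq3 k1 k2 k3 := by
  unfold normSq3
  positivity

theorem mgD_pos_of_ne_zero (ν : ℝ) {k1 k2 k3 : ℤ} (hk3 : k3 ≠ 0) : 0 < mgD ν k1 k2 k3 := by
  have := normSq3_pos_of_ne_zero (k1 := k1) (k2 := k2) hk3
  unfold mgD
  positivity

theorem mgM2_inviscid_of_k2_eq_zero (k1 k3 : ℤ) (hk3 : k3 ≠ 0) :
    mgM2 0 k1 0 k3 = -(k1 : ℝ) / k3 := by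
  have hnorm := (normSq3_pos_of_ne_zero (k1 := k1) (k2 := 0) hk3).ne'
  have hk3' : (k3 : ℝ) ≠ 0 := by exact_mod_cast hk3
  simp only [mgM2, mgD, Int.cast_zero]
  field_simp
  ring

theorem abs_mgM2_le_sqrt_sum_sq (ν : ℝ) (k1 k2 k3 : ℤ) :
    |mgM2 ν k1 k2 k3| ≤
      Real.sqrt ((mgM1 ν k1 k2 k3) ^ 2 + (mgM2 ν k1 k2 k3) ^ 2 + (mgM3 ν k1 k2 k3) ^ 2) :=
  Real.abs_le_sqrt (by nlinarith [sq_nonneg (mgM1 ν k1 k2 k3), sq_nonneg (mgM3 ν k1 k2 k3)])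

/-- The inviscid MG symbol is unbounded (a genuinely singular operator of order 1):
`M̂^0₂(n,0,1) = -n` for every `n ∈ ℤ`, and consequently for every `C > 0` there is a
`k ∈ ℤ³` with `d(k) ≠ 0` and `|M̂^0(k)| > C`. -/
theorem mg0_symbol_unbounded :
    (∀ n : ℤ, mgM2 0 n 0 1 = -(n : ℝ)) ∧
      ∀ C : ℝ, 0 < C →
        ∃ k1 k2 k3 : ℤ, mgD 0 k1 k2 k3 ≠ 0 ∧
          C < Real.sqrt ((mgM1 0 k1 k2 k3) ^ 2 + (mgM2 0 k1 k2 k3) ^ 2 + (mgM3 0 k1 k2 k3) ^ 2) := by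
  have hM2 : ∀ n : ℤ, mgM2 0 n 0 1 = -(n : ℝ) := fun n => by
    simpa using mgM2_inviscid_of_k2_eq_zero n 1 one_ne_zero
  refine ⟨hM2, fun C _ => ?_⟩
  obtain ⟨n, hn⟩ := exists_nat_gt C
  refine ⟨n, 0, 1, (mgD_pos_of_ne_zero 0 one_ne_zero).ne', ?_⟩
  calc C < n := hn
    _ = |mgM2 0 n 0 1| := by simp [hM2]
    _ ≤ _ := abs_mgM2_le_sqrt_sum_sq 0 n 0 1
end
end
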